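/- arXiv:2601.23101 — 5 statements merged into one kernel-verified Lean document; each statement's English description precedes it below -/
import Mathlib

section
/- For all integers l ≥ 3 and l_1 ≥ 1, the bull B(l, l_1) is a bipartite minor of the cycle C_{l+2l_1}. -/
open SimpleGraph

/-- Finite simple graphs are modelled as subgraphs of the complete graph on `ℕ`. -/
abbrev FG : Type := SimpleGraph.Subgraph (⊤ : SimpleGraph ℕ)

/-- Build a graph from a vertex set and a (not necessarily symmetric) edge description. -/
def ofRel (V : Set ℕ) (r : ℕ → ℕ → Prop) : FG where
  verts := V
  Adj x y := x ≠ y ∧ x ∈ V ∧ y ∈ V ∧ (r x y ∨ r y x)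
  adj_sub := fun h => (SimpleGraph.top_adj _ _).mpr h.1
  edge_vert := fun h => h.2.1
  symm := ⟨fun _ _ h => ⟨h.1.symm, h.2.2.1, h.2.1, h.2.2.2.symm⟩⟩

/-- The cycle `C_n` on `n` vertices. -/
def cycleFG (n : ℕ) : FG := ofRel {x | x < n} (fun i j => j = (i + 1) % n)

/-- The path `P_n` on `n` vertices. -/
def pathFG (n : ℕ) : FG := ofRel {x | x < n} (fun i j => j = i + 1)

/-- The bull `B(l, l1)`: a cycle (snout) of length `l` on `0,…,l-1`, together with a horn,
namely a path on the `l1` vertices `l,…,l+l1-1` joined by an edge to the snout vertex `0`. -/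
def bullFG (l l1 : ℕ) : FG :=
  ofRel {x | x < l + l1}
    (fun i j => (i < l ∧ j = (i + 1) % l) ∨ (l ≤ i ∧ j = i + 1 ∧ j < l + l1) ∨ (i = 0 ∧ j = l))

/-- The one-eared dog `D(l, l1)`: a snout cycle of length `l` on `0,…,l-1` together with an ear,
namely a cycle of length `l1` sharing the snout edge `{0,1}` (its `l1 - 2` new vertices
are `l,…,l+l1-3`). -/
def dog1FG (l l1 : ℕ) : FG :=
  ofRel {x | x < l + l1 - 2}
    (fun i j => (i < l ∧ j = (i + 1) % l) ∨ (i = 1 ∧ j = l) ∨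
      (l ≤ i ∧ j = i + 1 ∧ j ≤ l + l1 - 3) ∨ (i = l + l1 - 3 ∧ j = 0))

/-- The two-eared dog `D(l, l1, l2)`: a snout cycle of length `l` on `0,…,l-1` together with
an ear of length `l1` sharing the snout edge `{0,1}` (new vertices `l,…,l+l1-3`) and
an ear of length `l2` sharing the snout edge `{2,3}` (new vertices `l+l1-2,…,l+l1+l2-5`),
so the ears are attached at the consecutive snout vertices `0,1,2,3`. -/
def dog2FG (l l1 l2 : ℕ) : FG :=
  ofRel {x | x < l + l1 + l2 - 4}
    (fun i j => (i < l ∧ j = (i + 1) % l) ∨ (i = 1 ∧ j = l) ∨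
      (l ≤ i ∧ j = i + 1 ∧ j ≤ l + l1 - 3) ∨ (i = l + l1 - 3 ∧ j = 0) ∨
      (i = 3 ∧ j = l + l1 - 2) ∨ (l + l1 - 2 ≤ i ∧ j = i + 1 ∧ j ≤ l + l1 + l2 - 5) ∨
      (i = l + l1 + l2 - 5 ∧ j = 2))

/-- The tree `T_l`: a path `0,…,l` of length `l` (i.e. on `l+1` vertices), with the two extra
leaves `l+1, l+2` attached to the endpoint `0` and the two extra leaves `l+3, l+4` attached to
the endpoint `l`.  (Equivalently: obtained from two paths on three vertices and a path of
length `l` by identifying the endpoints of the latter with the internal vertices of the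
former two.) -/
def treeFG (l : ℕ) : FG :=
  ofRel {x | x < l + 5}
    (fun i j => (j = i + 1 ∧ j ≤ l) ∨ (i = 0 ∧ (j = l + 1 ∨ j = l + 2)) ∨
      (i = l ∧ (j = l + 3 ∨ j = l + 4)))

/-- The contraction of the vertices `u` and `v` in `H`: the two vertices are identified
(the merged vertex keeps the label `u`); the merged vertex is adjacent to every neighbour of
`u` or `v`. -/
def contractFG (H : FG) (u v : ℕ) : FG where
  verts := H.verts \ {v}
  Adj x y := x ≠ y ∧ x ≠ v ∧ y ≠ v ∧
    (H.Adj x y ∨ (x = u ∧ u ∈ H.verts ∧ H.Adj v y) ∨ (y = u ∧ u ∈ H.verts ∧ H.Adj x v))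
  adj_sub := fun h => (SimpleGraph.top_adj _ _).mpr h.1
  edge_vert := by
    rintro x y ⟨hxy, hxv, hyv, h | ⟨rfl, hu, h⟩ | ⟨h1, h2, h3⟩⟩
    · exact ⟨H.edge_vert h, hxv⟩
    · exact ⟨hu, hxv⟩
    · exact ⟨H.edge_vert h3, hxv⟩
  symm := by
    constructor
    rintro x y ⟨hxy, hxv, hyv, h | ⟨h1, h2, h3⟩ | ⟨h1, h2, h3⟩⟩
    · exact ⟨hxy.symm, hyv, hxv, Or.inl h.symm⟩
    · exact ⟨hxy.symm, hyv, hxv, Or.inr (Or.inr ⟨h1, h2, h3.symm⟩)⟩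
    · exact ⟨hxy.symm, hyv, hxv, Or.inr (Or.inl ⟨h1, h2, h3.symm⟩)⟩

/-- The number of connected components of a graph. -/
noncomputable def ncompFG (H : FG) : ℕ := Nat.card H.coe.ConnectedComponent

/-- `C` is the vertex set of an induced cycle of `H`: it is a finite set of vertices of `H`
whose induced subgraph is connected and `2`-regular, i.e. is exactly a cycle (in particular
the cycle has no chord). -/
def IsInducedCycleFG (H : FG) (C : Set ℕ) : Prop :=
  C ⊆ H.verts ∧ C.Finite ∧ 3 ≤ C.ncard ∧ ((H.induce C).coe).Connected ∧
    ∀ x ∈ C, {y | y ∈ C ∧ H.Adj x y}.ncard = 2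

/-- The cycle with vertex set `C` is non-separating in `H`: deleting it does not increase the
number of connected components. -/
def NonSeparatingFG (H : FG) (C : Set ℕ) : Prop :=
  ncompFG (H.deleteVerts C) ≤ ncompFG H

/-- The contraction of `u` and `v` in `H` is admissible: `u` and `v` have a common neighbour
`w` such that the path `u, w, v` is part of an induced non-separating cycle of `H`. -/
def AdmissiblePair (H : FG) (u v : ℕ) : Prop :=
  u ≠ v ∧ ∃ w, H.Adj u w ∧ H.Adj w v ∧
    ∃ C : Set ℕ, u ∈ C ∧ w ∈ C ∧ v ∈ C ∧ IsInducedCycleFG H C ∧ NonSeparatingFG H C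

/-- A single bipartite-minor operation: `BStep G H` holds when `H` is obtained from `G` by
deleting a vertex, deleting an edge, or performing an admissible contraction. -/
inductive BStep : FG → FG → Prop
  | deleteVert (G : FG) (v : ℕ) : BStep G (G.deleteVerts {v})
  | deleteEdge (G : FG) (e : Sym2 ℕ) : BStep G (G.deleteEdges {e})
  | contract (G : FG) (u v : ℕ) (h : AdmissiblePair G u v) : BStep G (contractFG G u v)

/-- A single minor operation: `MStep G H` holds when `H` is obtained from `G` by deleting a
vertex, deleting an edge, or contracting an edge. -/
inductive MStep : FG → FG → Prop
  | deleteVert (G : FG) (v : ℕ) : MStep G (G.deleteVerts {v})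
  | deleteEdge (G : FG) (e : Sym2 ℕ) : MStep G (G.deleteEdges {e})
  | contract (G : FG) (u v : ℕ) (h : G.Adj u v) : MStep G (contractFG G u v)

/-- Two graphs are isomorphic. -/
def IsoFG (H K : FG) : Prop := Nonempty (H.coe ≃g K.coe)

/-- `H ≤_B G`: `H` is a bipartite minor of `G`, i.e. (a graph isomorphic to) `H` can be obtained
from `G` by a sequence of vertex deletions, edge deletions and admissible contractions. -/
def BipMinor (H G : FG) : Prop :=
  ∃ H' : FG, Relation.ReflTransGen BStep G H' ∧ IsoFG H' H

/-- `H ≤_M G`: `H` is a minor of `G`, i.e. (a graph isomorphic to) `H` can be obtained from `G`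
by a sequence of vertex deletions, edge deletions and edge contractions. -/
def MinorFG (H G : FG) : Prop :=
  ∃ H' : FG, Relation.ReflTransGen MStep G H' ∧ IsoFG H' H

/-- A graph is `2`-connected if deleting any set of at most one vertex leaves a connected
graph. -/
def TwoConnectedFG (H : FG) : Prop :=
  ∀ U : Set ℕ, U.Subsingleton → ((H.deleteVerts U).coe).Connected

/-- `B` is a block of `G`: a maximal `2`-connected subgraph of `G`. -/
def IsBlockFG (G B : FG) : Prop :=
  B ≤ G ∧ TwoConnectedFG B ∧ ∀ B' : FG, B ≤ B' → B' ≤ G → TwoConnectedFG B' → B' = B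

/-- A graph is bipartite iff it is `2`-colourable. -/
def BipartiteFG (H : FG) : Prop := H.coe.Colorable 2

/-- A forest is an acyclic graph. -/
def ForestFG (H : FG) : Prop := H.coe.IsAcyclic

/-- `H` is (isomorphic to) a subgraph of `G`. -/
def IsSubgraphFG (H G : FG) : Prop := ∃ S : FG, S ≤ G ∧ IsoFG S H

/-!
Contracting the two neighbours `c - 1`, `c + 1` of a vertex `c` of `C_n` is admissible, through
the whole cycle, and leaves `C_{n-2}` with `c` pendant. After contracting `c - i` with `c + i` for
all `i ≤ j`, the graph is a bull whose snout is an induced cycle through `c - j - 1`, `c - j`,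
`c + j + 1` and whose horn `c - j + 1, …, c` is a path; deleting the snout leaves the horn, which
is connected, so the next contraction is admissible again. Folding `C_{l + 2 l1}` in this way
`l1` times around `c = l + l1 - 1` gives `B(l, l1)` with its horn at `l - 1`; reversing the snout
moves the horn to `0`.
-/

namespace SimpleGraph.Subgraph

variable {V : Type*} {G : SimpleGraph V}

theorem coe_preconnected_of_exists_adj_lt (S : G.Subgraph) (x₀ : V) (μ : V → ℕ)
    (h : ∀ x ∈ S.verts, x ≠ x₀ → ∃ y, S.Adj x y ∧ μ y < μ x) : S.coe.Preconnected := by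
  have reach : ∀ m x (hx : x ∈ S.verts), μ x < m →
      ∃ h₀ : x₀ ∈ S.verts, S.coe.Reachable ⟨x, hx⟩ ⟨x₀, h₀⟩ := by
    intro m
    induction m with
    | zero => intro x _ hx; omega
    | succ m ih =>
      intro x hx hμ
      by_cases hx₀ : x = x₀
      · subst hx₀; exact ⟨hx, .refl _⟩
      obtain ⟨y, hxy, hμy⟩ := h x hx hx₀
      obtain ⟨h₀, hy⟩ := ih y (S.edge_vert hxy.symm) (by omega)
      exact ⟨h₀, (show S.coe.Adj ⟨x, hx⟩ ⟨y, _⟩ from hxy).reachable.trans hy⟩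
  intro a b
  obtain ⟨h₀, ha⟩ := reach _ a a.2 (Nat.lt_succ_self _)
  obtain ⟨_, hb⟩ := reach _ b b.2 (Nat.lt_succ_self _)
  exact ha.trans hb.symm

end SimpleGraph.Subgraph

theorem ncompFG_le_one_of_preconnected {H : FG} (h : H.coe.Preconnected) : ncompFG H ≤ 1 :=
  have := h.subsingleton_connectedComponent
  Finite.card_le_one_iff_subsingleton.mpr this

theorem ncompFG_eq_one_of_connected {H : FG} (h : H.coe.Connected) : ncompFG H = 1 :=
  Nat.card_eq_one_iff_unique.mpr
    ⟨h.preconnected.subsingleton_connectedComponent, ⟨H.coe.connectedComponentMk h.nonempty.some⟩⟩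

theorem nonSeparatingFG_of_preconnected {H : FG} {C : Set ℕ} (hH : H.coe.Connected)
    (hC : (H.deleteVerts C).coe.Preconnected) : NonSeparatingFG H C :=
  (ncompFG_le_one_of_preconnected hC).trans (ncompFG_eq_one_of_connected hH).ge

theorem isInducedCycleFG_of_ncard_eq_two {H : FG} {C : Set ℕ} (hCV : C ⊆ H.verts)
    (hC : C.Finite) (hconn : (H.induce C).coe.Connected)
    (hdeg : ∀ x ∈ C, {y | y ∈ C ∧ H.Adj x y}.ncard = 2) : IsInducedCycleFG H C := by
  refine ⟨hCV, hC, ?_, hconn, hdeg⟩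
  obtain ⟨⟨x, hx⟩⟩ := hconn.nonempty
  have hsub : insert x {y | y ∈ C ∧ H.Adj x y} ⊆ C := Set.insert_subset hx fun y hy => hy.1
  have hxN : x ∉ {y | y ∈ C ∧ H.Adj x y} := fun hxx => hxx.2.ne rfl
  calc 3 = (insert x {y | y ∈ C ∧ H.Adj x y}).ncard := by
        rw [Set.ncard_insert_of_notMem hxN (hC.subset fun y hy => hy.1), hdeg x hx]
    _ ≤ C.ncard := Set.ncard_le_ncard hsub hC

@[simp] theorem ofRel_verts (V : Set ℕ) (r : ℕ → ℕ → Prop) : (ofRel V r).verts = V := rfl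

@[simp] theorem ofRel_adj (V : Set ℕ) (r : ℕ → ℕ → Prop) (x y : ℕ) :
    (ofRel V r).Adj x y ↔ x ≠ y ∧ x ∈ V ∧ y ∈ V ∧ (r x y ∨ r y x) := Iff.rfl

theorem ofRel_congr {V V' : Set ℕ} {r r' : ℕ → ℕ → Prop} (hV : V = V')
    (h : ∀ x ∈ V, ∀ y ∈ V, x ≠ y → r x y → r' x y ∨ r' y x)
    (h' : ∀ x ∈ V, ∀ y ∈ V, x ≠ y → r' x y → r x y ∨ r y x) :
    ofRel V r = ofRel V' r' := by
  subst hV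
  refine Subgraph.ext rfl ?_
  ext x y
  refine ⟨fun ⟨hxy, hx, hy, hr⟩ => ⟨hxy, hx, hy, ?_⟩, fun ⟨hxy, hx, hy, hr⟩ => ⟨hxy, hx, hy, ?_⟩⟩
  · exact hr.elim (h x hx y hy hxy) fun hr => (h y hy x hx hxy.symm hr).symm
  · exact hr.elim (h' x hx y hy hxy) fun hr => (h' y hy x hx hxy.symm hr).symm

theorem contractFG_ofRel (V : Set ℕ) (r : ℕ → ℕ → Prop) (u v : ℕ) :
    contractFG (ofRel V r) u v =
      ofRel (V \ {v}) (fun a b => r a b ∨ (a = u ∧ v ∈ V ∧ (r v b ∨ r b v))) := by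
  refine Subgraph.ext rfl ?_
  ext x y
  simp only [contractFG, ofRel]
  aesop

theorem isoFG_ofRel {V V' : Set ℕ} {r r' : ℕ → ℕ → Prop} (σ : Equiv.Perm ℕ)
    (hV : ∀ x, x ∈ V ↔ σ x ∈ V')
    (hr : ∀ x ∈ V, ∀ y ∈ V, x ≠ y → (r x y ∨ r y x ↔ r' (σ x) (σ y) ∨ r' (σ y) (σ x))) :
    IsoFG (ofRel V r) (ofRel V' r') := by
  refine ⟨⟨σ.subtypeEquiv hV, fun {a b} => ?_⟩⟩
  obtain ⟨a, ha⟩ := a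
  obtain ⟨b, hb⟩ := b
  change σ a ≠ σ b ∧ σ a ∈ V' ∧ σ b ∈ V' ∧ _ ↔ a ≠ b ∧ a ∈ V ∧ b ∈ V ∧ _
  rw [σ.injective.ne_iff, ← hV, ← hV]
  exact ⟨fun ⟨hab, _, _, h⟩ => ⟨hab, ha, hb, (hr a ha b hb hab).mpr h⟩,
    fun ⟨hab, _, _, h⟩ => ⟨hab, ha, hb, (hr a ha b hb hab).mp h⟩⟩

def CycleSucc (n a b : ℕ) : Prop := a + 1 < n ∧ b = a + 1 ∨ a + 1 = n ∧ b = 0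

theorem eq_add_one_mod_iff_cycleSucc {n a b : ℕ} (ha : a < n) :
    b = (a + 1) % n ↔ CycleSucc n a b := by
  unfold CycleSucc
  rcases Nat.lt_or_ge (a + 1) n with h | h
  · rw [Nat.mod_eq_of_lt h]; omega
  · rw [show a + 1 = n by omega, Nat.mod_self]; omega

theorem cycleFG_eq_ofRel (n : ℕ) : cycleFG n = ofRel {x | x < n} (CycleSucc n) :=
  ofRel_congr rfl (fun _ hx _ _ _ h => .inl ((eq_add_one_mod_iff_cycleSucc hx).mp h))
    (fun _ hx _ _ _ h => .inl ((eq_add_one_mod_iff_cycleSucc hx).mpr h))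

theorem bullFG_eq_ofRel (l l1 : ℕ) :
    bullFG l l1 = ofRel {x | x < l + l1}
      (fun a b => (b = a + 1 ∧ b ≠ l) ∨ (a + 1 = l ∧ b = 0) ∨ (a = 0 ∧ b = l)) := by
  have snout : ∀ a b, a < l ∧ b = (a + 1) % l ↔ a < l ∧ CycleSucc l a b :=
    fun a b => and_congr_right eq_add_one_mod_iff_cycleSucc
  refine ofRel_congr rfl ?_ ?_ <;> intro x hx y hy _ h <;>
    simp only [snout, CycleSucc, Set.mem_ofPred_eq] at hx hy h ⊢ <;> omega

/-- `C_n` after contracting `c - i` with `c + i` for `i = 1, …, j`: the vertices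
`c + 1, …, c + j` are gone and `c - j` is joined to the cycle successor of `c + j`. -/
def foldedCycle (n c j : ℕ) : FG :=
  ofRel {x | x ≤ c ∨ c + j < x ∧ x < n}
    (fun a b => CycleSucc n a b ∨ (a + j = c ∧ CycleSucc n (c + j) b))

def foldedCycleSnout (n c j : ℕ) : Set ℕ := {x | x + j ≤ c ∨ c + j < x ∧ x < n}

section foldedCycle

variable {n c j : ℕ}

theorem foldedCycle_zero (hc : c < n) : foldedCycle n c 0 = cycleFG n := by
  rw [cycleFG_eq_ofRel]
  refine ofRel_congr (by ext; simp only [Set.mem_ofPred_eq]; omega) ?_ ?_ <;>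
    intro x _ y _ _ h <;> simp only [CycleSucc] at h ⊢ <;> omega

theorem foldedCycle_coe_connected (hj : j ≤ c) (hc : c < n) :
    (foldedCycle n c j).coe.Connected := by
  refine (connected_iff _).mpr ⟨?_, ⟨0, Or.inl (Nat.zero_le c)⟩⟩
  refine Subgraph.coe_preconnected_of_exists_adj_lt _ 0 (fun x => x) fun x hx hx0 => ?_
  refine ⟨if x = c + j + 1 then c - j else x - 1, ?_⟩
  simp only [foldedCycle, ofRel_adj, ofRel_verts, Set.mem_ofPred_eq, CycleSucc] at hx ⊢
  split_ifs <;> omega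

theorem isInducedCycleFG_foldedCycleSnout (hj : j < c) (hn : c + j + 1 < n) :
    IsInducedCycleFG (foldedCycle n c j) (foldedCycleSnout n c j) := by
  refine isInducedCycleFG_of_ncard_eq_two ?_ ((Set.finite_lt_nat n).subset ?_) ?_ ?_
  · intro x hx
    simp only [foldedCycleSnout, foldedCycle, ofRel_verts, Set.mem_ofPred_eq] at hx ⊢
    omega
  · intro x hx
    simp only [foldedCycleSnout, Set.mem_ofPred_eq] at hx ⊢
    omega
  · refine (connected_iff _).mpr ⟨?_, ⟨0, by simp only [foldedCycleSnout,
      Subgraph.induce_verts, Set.mem_ofPred_eq]; omega⟩⟩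
    refine Subgraph.coe_preconnected_of_exists_adj_lt _ 0 (fun x => x) fun x hx hx0 => ?_
    refine ⟨if x = c + j + 1 then c - j else x - 1, ?_⟩
    simp only [Subgraph.induce_verts, Subgraph.induce_adj, foldedCycle,
      foldedCycleSnout, ofRel_adj, Set.mem_ofPred_eq, CycleSucc] at hx ⊢
    split_ifs <;> omega
  · intro x hx
    have hnbrs : {y | y ∈ foldedCycleSnout n c j ∧ (foldedCycle n c j).Adj x y} =
        {if x = 0 then n - 1 else if x = c + j + 1 then c - j else x - 1,
         if x = c - j then c + j + 1 else if x = n - 1 then 0 else x + 1} := by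
      ext y
      simp only [foldedCycleSnout, foldedCycle, ofRel_adj, Set.mem_ofPred_eq, Set.mem_insert_iff,
        Set.mem_singleton_iff, CycleSucc] at hx ⊢
      split_ifs <;> omega
    rw [hnbrs, Set.ncard_pair]
    simp only [foldedCycleSnout, Set.mem_ofPred_eq] at hx
    split_ifs <;> omega

theorem foldedCycle_deleteVerts_snout_preconnected (hc : c < n) :
    ((foldedCycle n c j).deleteVerts (foldedCycleSnout n c j)).coe.Preconnected := by
  refine Subgraph.coe_preconnected_of_exists_adj_lt _ c (fun x => c - x)
    fun x hx hxc => ⟨x + 1, ?_⟩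
  simp only [Subgraph.deleteVerts_verts, Subgraph.deleteVerts_adj,
    foldedCycle, foldedCycleSnout, ofRel_adj, ofRel_verts, Set.mem_sdiff, Set.mem_ofPred_eq,
    CycleSucc, and_true] at hx ⊢
  omega

theorem admissiblePair_foldedCycle (hj : j < c) (hn : c + j + 1 < n) :
    AdmissiblePair (foldedCycle n c j) (c - j - 1) (c + j + 1) := by
  refine ⟨by omega, c - j, ?_, ?_, foldedCycleSnout n c j, ?_, ?_, ?_,
    isInducedCycleFG_foldedCycleSnout hj hn,
    nonSeparatingFG_of_preconnected (foldedCycle_coe_connected hj.le (by omega))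
      (foldedCycle_deleteVerts_snout_preconnected (by omega))⟩
  all_goals
    simp only [foldedCycle, foldedCycleSnout, ofRel_adj, Set.mem_ofPred_eq, CycleSucc, and_true]
    omega

theorem contractFG_foldedCycle (hj : j < c) (hn : c + j + 1 < n) :
    contractFG (foldedCycle n c j) (c - j - 1) (c + j + 1) = foldedCycle n c (j + 1) := by
  rw [foldedCycle, contractFG_ofRel]
  refine ofRel_congr ?_ ?_ ?_
  · ext x
    simp only [Set.mem_sdiff, Set.mem_ofPred_eq, Set.mem_singleton_iff]
    omega
  · intro x hx y hy _ h
    simp only [Set.mem_sdiff, Set.mem_ofPred_eq, Set.mem_singleton_iff] at hx hy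
    rcases h with (h | ⟨hb, h⟩) | ⟨rfl, -, (h | ⟨hb, h⟩) | (h | ⟨hb, h⟩)⟩
    · exact .inl (.inl h)
    · unfold CycleSucc at h; omega
    · exact .inl (.inr ⟨by omega, h⟩)
    · omega
    · unfold CycleSucc at h ⊢; omega
    · unfold CycleSucc at h ⊢; omega
  · intro x hx y hy _ h
    simp only [Set.mem_sdiff, Set.mem_ofPred_eq, Set.mem_singleton_iff] at hx hy
    rcases h with h | ⟨hb, h⟩
    · exact .inl (.inl (.inl h))
    · exact .inl (.inr ⟨by omega, .inr ⟨by omega, hn⟩, .inl (.inl h)⟩)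

theorem reflTransGen_bStep_foldedCycle (hj : j ≤ c) (hn : c + j < n) :
    Relation.ReflTransGen BStep (foldedCycle n c 0) (foldedCycle n c j) := by
  induction j with
  | zero => exact .refl
  | succ j ih =>
    refine (ih (by omega) (by omega)).tail ?_
    rw [← contractFG_foldedCycle (by omega) hn]
    exact BStep.contract _ _ _ (admissiblePair_foldedCycle (by omega) hn)

end foldedCycle

def reflectBelow (l x : ℕ) : ℕ := if x < l then l - 1 - x else x

theorem reflectBelow_involutive (l : ℕ) : Function.Involutive (reflectBelow l) := by
  intro x
  unfold reflectBelow
  split_ifs <;> omega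

theorem isoFG_foldedCycle_bullFG {l l1 : ℕ} (hl : 1 ≤ l) :
    IsoFG (foldedCycle (l + 2 * l1) (l + l1 - 1) l1) (bullFG l l1) := by
  rw [bullFG_eq_ofRel]
  refine isoFG_ofRel (reflectBelow_involutive l).toPerm (fun x => ?_) fun x hx y hy _ => ?_
  · simp only [Function.Involutive.coe_toPerm, reflectBelow, Set.mem_ofPred_eq]
    split_ifs <;> omega
  · simp only [Function.Involutive.coe_toPerm, reflectBelow, Set.mem_ofPred_eq, CycleSucc]
      at hx hy ⊢
    split_ifs <;> omega

theorem bull_isBipMinor_cycle_general (l l1 : ℕ) (hl : 3 ≤ l) :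
    BipMinor (bullFG l l1) (cycleFG (l + 2 * l1)) := by
  refine ⟨foldedCycle (l + 2 * l1) (l + l1 - 1) l1, ?_, isoFG_foldedCycle_bullFG (by omega)⟩
  rw [← foldedCycle_zero (c := l + l1 - 1) (by omega)]
  exact reflTransGen_bStep_foldedCycle (by omega) (by omega)

/-- For all integers `l ≥ 3` and `l1 ≥ 1`, the bull `B(l, l1)` is a bipartite minor
of the cycle `C_{l + 2*l1}`. -/
theorem bull_isBipMinor_cycle (l l1 : ℕ) (hl : 3 ≤ l) (hl1 : 1 ≤ l1) :
    BipMinor (bullFG l l1) (cycleFG (l + 2 * l1)) :=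
  bull_isBipMinor_cycle_general l l1 hl
end

section
/- There exist infinitely many pairs of bipartite graphs (G, H) such that H is a bipartite minor of G but H is not a minor of G. -/
open SimpleGraph

/-!
Take for `G` the even cycle `C_{2n+6}` and for `H` the graph obtained from it by identifying the
vertices `0` and `2`, i.e. a cycle `C_{2n+4}` with a pendant edge. The whole cycle is an induced
cycle of itself, and a non-separating one since deleting it leaves no component at all, so this
contraction is admissible; it keeps the graph bipartite because `0` and `2` have the same parity.
But the merged vertex has degree three, and deleting vertices or edges or contracting edges never
creates a vertex of degree three in a graph of maximum degree at most two.
-/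

/-- Stated without `ncard`, which is junk on infinite sets, so that no finiteness is needed. -/
def MaxDegreeLeTwo (K : FG) : Prop :=
  ∀ ⦃x a b c : ℕ⦄, K.Adj x a → K.Adj x b → K.Adj x c → a = b ∨ a = c ∨ b = c

namespace MaxDegreeLeTwo

variable {K K' : FG}

lemma mono (hK : MaxDegreeLeTwo K) (h : K' ≤ K) : MaxDegreeLeTwo K' :=
  fun _ _ _ _ ha hb hc => hK (h.2 ha) (h.2 hb) (h.2 hc)

lemma eq_of_adj_of_ne (hK : MaxDegreeLeTwo K) {x w a b : ℕ} (hw : K.Adj x w)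
    (ha : K.Adj x a) (hb : K.Adj x b) (haw : a ≠ w) (hbw : b ≠ w) : a = b :=
  (hK ha hb hw).resolve_right fun h => h.elim haw hbw

lemma contractFG (hK : MaxDegreeLeTwo K) {u v : ℕ} (huv : K.Adj u v) :
    MaxDegreeLeTwo (contractFG K u v) := by
  -- `u` and `v` are adjacent, so each has at most one further neighbour; for `x ≠ u`, the
  -- neighbour `u` of `x` in the contraction stands for its neighbour `v` in `K`.
  rintro x a b c ⟨hxa, hxv, hav, ha⟩ ⟨hxb, -, hbv, hb⟩ ⟨hxc, -, hcv, hc⟩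
  have hu : ∀ ⦃a b⦄, K.Adj u a → K.Adj u b → a ≠ v → b ≠ v → a = b :=
    fun _ _ => hK.eq_of_adj_of_ne huv
  have hv : ∀ ⦃a b⦄, K.Adj v a → K.Adj v b → a ≠ u → b ≠ u → a = b :=
    fun _ _ => hK.eq_of_adj_of_ne huv.symm
  grind [MaxDegreeLeTwo]

lemma of_mStep (hK : MaxDegreeLeTwo K) (h : MStep K K') : MaxDegreeLeTwo K' := by
  cases h with
  | deleteVert _ => exact hK.mono Subgraph.deleteVerts_le
  | deleteEdge _ => exact hK.mono (Subgraph.deleteEdges_le _)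
  | contract u v huv => exact hK.contractFG huv

lemma of_isoFG (hK : MaxDegreeLeTwo K) (h : IsoFG K K') : MaxDegreeLeTwo K' := by
  obtain ⟨f⟩ := h
  intro x a b c ha hb hc
  have hf : ∀ {y} (hy : K'.Adj x y),
      K.Adj (f.symm ⟨x, ha.fst_mem⟩) (f.symm ⟨y, hy.snd_mem⟩) :=
    fun hy => f.symm.map_adj_iff.mpr hy
  simpa only [Subtype.val_inj, EmbeddingLike.apply_eq_iff_eq, Subtype.mk.injEq] using
    hK (hf ha) (hf hb) (hf hc)

lemma of_reflTransGen (hK : MaxDegreeLeTwo K) (h : Relation.ReflTransGen MStep K K') :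
    MaxDegreeLeTwo K' := by
  induction h with
  | refl => exact hK
  | tail _ hstep ih => exact ih.of_mStep hstep

lemma of_minorFG (hK : MaxDegreeLeTwo K) (h : MinorFG K' K) : MaxDegreeLeTwo K' :=
  let ⟨_, hsteps, hiso⟩ := h
  (hK.of_reflTransGen hsteps).of_isoFG hiso

end MaxDegreeLeTwo

lemma bipartiteFG_of_adj_mod_two {K : FG} (h : ∀ ⦃x y⦄, K.Adj x y → x % 2 ≠ y % 2) :
    BipartiteFG K :=
  ⟨Coloring.mk (fun v => ⟨v.1 % 2, Nat.mod_lt _ two_pos⟩) fun hvw hc => h hvw (congrArg Fin.val hc)⟩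

lemma ne_of_contractFG_adj {α : Type*} {K : FG} (c : ℕ → α) (hc : ∀ ⦃x y⦄, K.Adj x y → c x ≠ c y)
    {u v x y : ℕ} (huv : c u = c v) (h : (contractFG K u v).Adj x y) : c x ≠ c y := by
  obtain ⟨-, -, -, h | ⟨rfl, -, h⟩ | ⟨rfl, -, h⟩⟩ := h
  · exact hc h
  · exact huv ▸ hc h
  · exact huv ▸ hc h

lemma nonSeparatingFG_verts (K : FG) : NonSeparatingFG K K.verts := by
  have : IsEmpty (K.deleteVerts K.verts).coe.ConnectedComponent :=
    ⟨fun c => c.ind fun v => v.2.2 v.2.1⟩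
  rw [NonSeparatingFG, ncompFG, Nat.card_of_isEmpty]
  exact Nat.zero_le _

section Cycle

variable {N : ℕ}

lemma cycleFG_verts : (cycleFG N).verts = Set.Iio N := rfl

lemma add_one_mod_of_lt {a : ℕ} (ha : a < N) : (a + 1) % N = if a + 1 = N then 0 else a + 1 := by
  split_ifs with h
  · simp [h]
  · exact Nat.mod_eq_of_lt (by omega)

lemma cycleFG_adj_iff {x y : ℕ} :
    (cycleFG N).Adj x y ↔ x ≠ y ∧ x < N ∧ y < N ∧
      (y = x + 1 ∨ x = y + 1 ∨ x = 0 ∧ y + 1 = N ∨ y = 0 ∧ x + 1 = N) := by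
  show x ≠ y ∧ x < N ∧ y < N ∧ (y = (x + 1) % N ∨ x = (y + 1) % N) ↔ _
  refine and_congr_right fun _ => and_congr_right fun hx => and_congr_right fun hy => ?_
  rw [add_one_mod_of_lt hx, add_one_mod_of_lt hy]
  split_ifs <;> omega

lemma cycleFG_maxDegreeLeTwo (N : ℕ) : MaxDegreeLeTwo (cycleFG N) := by
  intro x a b c ha hb hc
  rw [cycleFG_adj_iff] at ha hb hc
  omega

lemma cycleFG_adj_mod_two (hN : Even N) {x y : ℕ} (h : (cycleFG N).Adj x y) : x % 2 ≠ y % 2 := by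
  obtain ⟨k, rfl⟩ := hN
  rw [cycleFG_adj_iff] at h
  omega

lemma cycleFG_connected (hN : 0 < N) : (cycleFG N).coe.Connected := by
  have : Nonempty (cycleFG N).verts := ⟨⟨0, hN⟩⟩
  suffices h : ∀ k (hk : k < N), (cycleFG N).coe.Reachable ⟨k, hk⟩ ⟨0, hN⟩ from
    ⟨fun u v => (h u.1 u.2).trans (h v.1 v.2).symm⟩
  intro k
  induction k with
  | zero => exact fun _ => Reachable.refl _
  | succ k ih =>
    intro hk
    have hadj : (cycleFG N).coe.Adj ⟨k + 1, hk⟩ ⟨k, show k < N by omega⟩ :=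
      show (cycleFG N).Adj (k + 1) k from cycleFG_adj_iff.mpr ⟨by omega, hk, by omega, by omega⟩
    exact hadj.reachable.trans (ih _)

lemma cycleFG_isInducedCycleFG (hN : 3 ≤ N) : IsInducedCycleFG (cycleFG N) (cycleFG N).verts := by
  refine ⟨subset_rfl, Set.finite_Iio N, by simpa [cycleFG_verts] using hN, ?_, fun x hx => ?_⟩
  · rw [Subgraph.induce_self_verts]
    exact cycleFG_connected (by omega)
  · have hx : x < N := hx
    have hnbrs : {y | y ∈ (cycleFG N).verts ∧ (cycleFG N).Adj x y} =
        {if x + 1 = N then 0 else x + 1, if x = 0 then N - 1 else x - 1} := by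
      ext y
      simp only [cycleFG_verts, cycleFG_adj_iff, Set.mem_ofPred_eq, Set.mem_Iio,
        Set.mem_insert_iff, Set.mem_singleton_iff]
      split_ifs <;> omega
    rw [hnbrs, Set.ncard_pair (by split_ifs <;> omega)]

lemma cycleFG_admissiblePair (hN : 3 ≤ N) : AdmissiblePair (cycleFG N) 0 2 :=
  ⟨by omega, 1, cycleFG_adj_iff.mpr (by omega), cycleFG_adj_iff.mpr (by omega),
    (cycleFG N).verts, show 0 < N by omega, show 1 < N by omega, show 2 < N by omega,
    cycleFG_isInducedCycleFG hN, nonSeparatingFG_verts _⟩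

lemma not_maxDegreeLeTwo_contractFG_cycleFG (hN : 5 ≤ N) :
    ¬ MaxDegreeLeTwo (contractFG (cycleFG N) 0 2) := by
  intro h
  have h1 : (contractFG (cycleFG N) 0 2).Adj 0 1 :=
    ⟨by omega, by omega, by omega, Or.inl (cycleFG_adj_iff.mpr (by omega))⟩
  have h3 : (contractFG (cycleFG N) 0 2).Adj 0 3 :=
    ⟨by omega, by omega, by omega,
      Or.inr (Or.inl ⟨rfl, show 0 < N by omega, cycleFG_adj_iff.mpr (by omega)⟩)⟩
  have hlast : (contractFG (cycleFG N) 0 2).Adj 0 (N - 1) :=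
    ⟨by omega, by omega, by omega, Or.inl (cycleFG_adj_iff.mpr (by omega))⟩
  have := h h1 h3 hlast
  omega

end Cycle

/-- There exist infinitely many pairs of bipartite graphs `(G, H)` such that `H`
is a bipartite minor of `G` but `H` is not a minor of `G` (infinitude is expressed by a
sequence of such pairs that are pairwise non-isomorphic). -/
theorem infinitely_many_bipMinor_not_minor :
    ∃ G H : ℕ → FG,
      (∀ n, (G n).verts.Finite ∧ (H n).verts.Finite ∧
        BipartiteFG (G n) ∧ BipartiteFG (H n) ∧
        BipMinor (H n) (G n) ∧ ¬ MinorFG (H n) (G n)) ∧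
      (∀ m n, IsoFG (G m) (G n) → IsoFG (H m) (H n) → m = n) := by
  refine ⟨fun n => cycleFG (2 * n + 6), fun n => contractFG (cycleFG (2 * n + 6)) 0 2,
    fun n => ?_, ?_⟩
  · have hEven : Even (2 * n + 6) := ⟨n + 3, by ring⟩
    refine ⟨Set.finite_Iio _, (Set.finite_Iio _).sdiff,
      bipartiteFG_of_adj_mod_two fun _ _ => cycleFG_adj_mod_two hEven,
      bipartiteFG_of_adj_mod_two fun _ _ => ne_of_contractFG_adj (· % 2)
        (fun _ _ => cycleFG_adj_mod_two hEven) rfl,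
      ⟨_, .single (.contract _ 0 2 (cycleFG_admissiblePair (by omega))), ⟨RelIso.refl _⟩⟩,
      fun h => not_maxDegreeLeTwo_contractFG_cycleFG (by omega)
        ((cycleFG_maxDegreeLeTwo _).of_minorFG h)⟩
  · rintro m n ⟨f⟩ -
    have hcard := Nat.card_congr f.toEquiv
    simp only [Nat.card_coe_set_eq, cycleFG_verts, Set.ncard_Iio_nat] at hcard
    omega
end

section
/- If G is a bipartite graph and H is a bipartite minor of G, then H is bipartite. In particular, performing an admissible contraction on a bipartite graph yields a bipartite graph. -/
open SimpleGraph

/-! Deletions and isomorphisms map into the original graph, so a `2`-colouring pulls back. An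
admissible contraction merges two vertices with a common neighbour, which every `2`-colouring
paints alike, so the colouring descends to the contracted graph. -/

lemma BipartiteFG.of_hom {H K : FG} (f : H.coe →g K.coe) (h : BipartiteFG K) : BipartiteFG H :=
  Colorable.of_hom f h

lemma BipartiteFG.of_le {H K : FG} (hHK : H ≤ K) (h : BipartiteFG K) : BipartiteFG H :=
  Colorable.of_hom (Subgraph.inclusion hHK) h

lemma colorable_contractFG {G : FG} {u v n : ℕ} (c : G.coe.Coloring (Fin n)) (hu : u ∈ G.verts)
    (hv : v ∈ G.verts) (hcuv : c ⟨u, hu⟩ = c ⟨v, hv⟩) : (contractFG G u v).coe.Colorable n := by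
  refine ⟨Coloring.mk (fun x => c ⟨x.1, x.2.1⟩) ?_⟩
  rintro ⟨x, hx⟩ ⟨y, hy⟩ ⟨-, -, -, hxy | ⟨hxu, -, hvy⟩ | ⟨hyu, -, hxv⟩⟩
  · exact c.valid hxy.coe
  · obtain rfl : x = u := hxu
    exact fun h => c.valid hvy.coe (hcuv.symm.trans h)
  · obtain rfl : y = u := hyu
    exact fun h => c.valid hxv.coe (h.trans hcuv)

lemma SimpleGraph.Coloring.fin_two_eq_of_adj_adj {V : Type*} {G : SimpleGraph V} (c : G.Coloring (Fin 2))
    {u w v : V} (huw : G.Adj u w) (hwv : G.Adj w v) : c u = c v := by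
  have h₁ := c.valid huw
  have h₂ := c.valid hwv.symm
  omega

lemma BipartiteFG.contractFG_of_adj_adj {G : FG} {u w v : ℕ} (huw : G.Adj u w) (hwv : G.Adj w v)
    (h : BipartiteFG G) : BipartiteFG (contractFG G u v) := by
  obtain ⟨c⟩ := h
  exact colorable_contractFG c (G.edge_vert huw) (G.edge_vert hwv.symm)
    (c.fin_two_eq_of_adj_adj huw.coe hwv.coe)

lemma BipartiteFG.contractFG {G : FG} {u v : ℕ} (hadm : AdmissiblePair G u v)
    (h : BipartiteFG G) : BipartiteFG (contractFG G u v) := by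
  obtain ⟨-, w, huw, hwv, -⟩ := hadm
  exact h.contractFG_of_adj_adj huw hwv

lemma BStep.bipartiteFG {G H : FG} (hGH : BStep G H) (h : BipartiteFG G) : BipartiteFG H := by
  cases hGH with
  | deleteVert v => exact h.of_le G.deleteVerts_le
  | deleteEdge e => exact h.of_le (G.deleteEdges_le _)
  | contract u v hadm => exact h.contractFG hadm

lemma BipartiteFG.of_reflTransGen_bStep {G H : FG} (hGH : Relation.ReflTransGen BStep G H)
    (h : BipartiteFG G) : BipartiteFG H := by
  induction hGH with
  | refl => exact h
  | tail _ step ih => exact step.bipartiteFG ih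

lemma BipMinor.bipartiteFG {G H : FG} (hHG : BipMinor H G) (h : BipartiteFG G) :
    BipartiteFG H := by
  obtain ⟨H', hsteps, ⟨e⟩⟩ := hHG
  exact (h.of_reflTransGen_bStep hsteps).of_hom e.symm.toHom

/-- If `G` is a (finite) bipartite graph and `H` is a bipartite minor of `G`,
then `H` is bipartite.  In particular, performing an admissible contraction on a bipartite
graph yields a bipartite graph. -/
theorem bipMinor_preserves_bipartite :
    (∀ G H : FG, G.verts.Finite → BipartiteFG G → BipMinor H G → BipartiteFG H) ∧
    (∀ (G : FG) (u v : ℕ), G.verts.Finite → BipartiteFG G → AdmissiblePair G u v →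
      BipartiteFG (contractFG G u v)) :=
  ⟨fun _ _ _ h hHG => hHG.bipartiteFG h, fun _ _ _ _ h hadm => h.contractFG hadm⟩
end

section
/- No admissible contraction can be performed on a forest; consequently, for forests F_1 and F_2, F_1 is a bipartite minor of F_2 if and only if F_1 is isomorphic to a subgraph of F_2. -/
open SimpleGraph

/-!
An admissible contraction needs an induced cycle, and a forest has none: the subgraph induced
on the vertex set of such a cycle would be a finite tree with at least three vertices, hence
would have a leaf, whereas every vertex of an induced cycle has exactly two neighbours on it.
So on forests the bipartite-minor operations reduce to vertex and edge deletions, which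
produce exactly the subgraphs of a finite graph.
-/

namespace SimpleGraph.Subgraph

variable {V : Type*} {G' : SimpleGraph V}

lemma edgeSet_finite_of_verts_finite {G : G'.Subgraph} (h : G.verts.Finite) :
    G.edgeSet.Finite := by
  refine ((h.prod h).image fun p => s(p.1, p.2)).subset ?_
  intro e he
  induction e with
  | _ x y => exact ⟨(x, y), ⟨G.edge_vert he, G.edge_vert he.symm⟩, rfl⟩

lemma deleteVerts_deleteEdges_sdiff_of_le {S G : G'.Subgraph} (h : S ≤ G) :
    (G.deleteEdges (G.edgeSet \ S.edgeSet)).deleteVerts (G.verts \ S.verts) = S := by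
  ext x y
  · simp [Set.inter_eq_self_of_subset_right h.1]
  · simp only [induce_adj, deleteEdges_verts, sdiff_sdiff_right_self,
      Set.inf_eq_inter, Set.mem_inter_iff, deleteEdges_adj, Set.mem_sdiff,
      not_and, not_not]
    exact ⟨fun hxy => hxy.2.2.2 hxy.2.2.1, fun hS =>
      ⟨⟨h.1 (S.edge_vert hS), S.edge_vert hS⟩, ⟨h.1 (S.edge_vert hS.symm), S.edge_vert hS.symm⟩,
        h.2 hS, fun _ => hS⟩⟩

lemma degree_coe_induce (H : G'.Subgraph) (C : Set V) (a : (H.induce C).verts)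
    [Fintype ((H.induce C).coe.neighborSet a)] :
    (H.induce C).coe.degree a = {y | y ∈ C ∧ H.Adj a y}.ncard := by
  have himage : Subtype.val '' (H.induce C).coe.neighborSet a = {y | y ∈ C ∧ H.Adj a y} := by
    ext y
    constructor
    · rintro ⟨b, hb, rfl⟩
      exact ⟨b.2, hb.2.2⟩
    · rintro ⟨hyC, hadj⟩
      exact ⟨⟨y, hyC⟩, ⟨a.2, hyC, hadj⟩, rfl⟩
  rw [← card_neighborSet_eq_degree, ← Nat.card_eq_fintype_card, Nat.card_coe_set_eq, ← himage,
    Set.ncard_image_of_injective _ Subtype.val_injective]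

end SimpleGraph.Subgraph

lemma ForestFG.anti {H G : FG} (h : H ≤ G) (hG : ForestFG G) : ForestFG H :=
  hG.comap (Subgraph.inclusion h) (Subgraph.inclusion.injective h)

lemma ForestFG.not_isInducedCycleFG {F : FG} (hF : ForestFG F) (C : Set ℕ) :
    ¬ IsInducedCycleFG F C := by
  rintro ⟨hCsub, hCfin, hC3, hconn, hdeg⟩
  classical
  have : Finite C := hCfin
  have : Fintype (F.induce C).verts := hCfin.fintype
  have : Nontrivial (F.induce C).verts :=
    (Set.one_lt_ncard_iff_nontrivial (s := C)).mp (by omega) |>.coe_sort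
  have hle : F.induce C ≤ F :=
    (Subgraph.induce_mono_right hCsub).trans Subgraph.induce_self_verts.le
  have htree : (F.induce C).coe.IsTree := ⟨hconn, hF.anti hle⟩
  obtain ⟨a, hleaf⟩ := htree.exists_vert_degree_one_of_nontrivial
  rw [Subgraph.degree_coe_induce] at hleaf
  have htwo := hdeg a a.2
  omega

lemma ForestFG.not_admissiblePair {F : FG} (hF : ForestFG F) (u v : ℕ) :
    ¬ AdmissiblePair F u v := by
  rintro ⟨-, -, -, -, C, -, -, -, hC, -⟩
  exact hF.not_isInducedCycleFG C hC

lemma ForestFG.le_of_reflTransGen_bStep {G H : FG} (hG : ForestFG G)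
    (h : Relation.ReflTransGen BStep G H) : H ≤ G := by
  induction h with
  | refl => exact le_rfl
  | tail _ hstep ih =>
    cases hstep with
    | deleteVert v => exact Subgraph.deleteVerts_le.trans ih
    | deleteEdge e => exact (Subgraph.deleteEdges_le _).trans ih
    | contract u v h => exact absurd h ((hG.anti ih).not_admissiblePair u v)

lemma BStep.reflTransGen_deleteVerts (G : FG) {U : Set ℕ} (hU : U.Finite) :
    Relation.ReflTransGen BStep G (G.deleteVerts U) := by
  induction U, hU using Set.Finite.induction_on with
  | empty => rw [Subgraph.deleteVerts_empty]
  | @insert a s _ _ ih =>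
    rw [← Set.union_singleton, ← Subgraph.deleteVerts_deleteVerts]
    exact ih.tail (BStep.deleteVert _ a)

lemma BStep.reflTransGen_deleteEdges (G : FG) {D : Set (Sym2 ℕ)} (hD : D.Finite) :
    Relation.ReflTransGen BStep G (G.deleteEdges D) := by
  induction D, hD using Set.Finite.induction_on with
  | empty => rw [Subgraph.deleteEdges_empty_eq]
  | @insert e s _ _ ih =>
    rw [← Set.union_singleton, ← Subgraph.deleteEdges_deleteEdges]
    exact ih.tail (BStep.deleteEdge _ e)

lemma BStep.reflTransGen_of_le {S G : FG} (hG : G.verts.Finite) (h : S ≤ G) :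
    Relation.ReflTransGen BStep G S := by
  have hedges := Subgraph.edgeSet_finite_of_verts_finite hG
  rw [← Subgraph.deleteVerts_deleteEdges_sdiff_of_le h]
  exact (BStep.reflTransGen_deleteEdges G (hedges.subset Set.sdiff_subset)).trans
    (BStep.reflTransGen_deleteVerts _ (hG.subset Set.sdiff_subset))

/-- No admissible contraction can be performed on a forest; consequently, for
(finite) forests `F1` and `F2`, `F1` is a bipartite minor of `F2` if and only if `F1` is
isomorphic to a subgraph of `F2`. -/
theorem forest_no_admissible_and_bipMinor_iff_subgraph :
    (∀ F : FG, ForestFG F → ∀ u v : ℕ, ¬ AdmissiblePair F u v) ∧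
    (∀ F1 F2 : FG, F1.verts.Finite → F2.verts.Finite → ForestFG F1 → ForestFG F2 →
      (BipMinor F1 F2 ↔ IsSubgraphFG F1 F2)) := by
  refine ⟨fun F hF => hF.not_admissiblePair, fun F1 F2 _ hfin _ hF2 => ⟨?_, ?_⟩⟩
  · rintro ⟨H, hsteps, hiso⟩
    exact ⟨H, hF2.le_of_reflTransGen_bStep hsteps, hiso⟩
  · rintro ⟨S, hle, hiso⟩
    exact ⟨S, BStep.reflTransGen_of_le hfin hle, hiso⟩
end

section
/- For each integer l ≥ 2, let T_l be the tree obtained from two paths P^{(1)}, P^{(2)} each on three vertices and a path P^{(3)} of length l by identifying one endpoint of P^{(3)} with the internal vertex of P^{(1)} and the other endpoint of P^{(3)} with the internal vertex of P^{(2)}. Then for all integers 2 ≤ l < l', T_l is a minor of T_{l'} but T_l is not a bipartite minor of T_{l'}. In particular, there exist infinitely many pairs of bipartite graphs (G, H) such that H is a minor of G but not a bipartite minor of G. -/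
open SimpleGraph

/-!
The labels of `T_l` increase away from the vertex `0`, so every vertex has at most one
neighbour with a smaller label, and no subgraph of `T_{l'}` has an induced cycle (its largest
vertex would have two smaller neighbours on it). Hence no contraction is ever admissible, and a
bipartite minor of `T_{l'}` is just a subgraph. An embedding of `T_l` into `T_{l'}` must send the
two branch vertices of `T_l` to those of `T_{l'}`, which are at distance `l' > l`, while their
preimages are joined by a path of length `l`. Contracting `l' - l` spine edges, on the other hand,
shortens `T_{l'}` to a copy of `T_l`.
-/

def LowerNbrsSubsingleton (G : FG) : Prop := ∀ m, {a | G.Adj m a ∧ a < m}.Subsingleton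

lemma LowerNbrsSubsingleton.mono {G H : FG} (hG : LowerNbrsSubsingleton G) (hle : H ≤ G) :
    LowerNbrsSubsingleton H :=
  fun m _ ha _ hb => hG m ⟨hle.2 ha.1, ha.2⟩ ⟨hle.2 hb.1, hb.2⟩

lemma LowerNbrsSubsingleton.not_isInducedCycleFG {H : FG} (hH : LowerNbrsSubsingleton H)
    (C : Set ℕ) : ¬ IsInducedCycleFG H C := by
  rintro ⟨-, hCfin, hC3, -, hdeg⟩
  obtain ⟨m, hmC, hmax⟩ :=
    hCfin.exists_maximalFor id C (Set.nonempty_of_ncard_ne_zero (by omega))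
  obtain ⟨a, b, hab, hS⟩ := Set.ncard_eq_two.mp (hdeg m hmC)
  have lower : ∀ x ∈ ({a, b} : Set ℕ), H.Adj m x ∧ x < m := by
    rw [← hS]
    rintro x ⟨hxC, hmx⟩
    refine ⟨hmx, lt_of_le_of_ne ?_ (Subgraph.Adj.ne hmx).symm⟩
    exact le_of_not_gt fun hlt => (hmax hxC hlt.le).not_gt hlt
  exact hab (hH m (lower a (by simp)) (lower b (by simp)))

lemma LowerNbrsSubsingleton.not_admissiblePair {H : FG} (hH : LowerNbrsSubsingleton H)
    (u v : ℕ) : ¬ AdmissiblePair H u v := by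
  rintro ⟨-, -, -, -, C, -, -, -, hC, -⟩
  exact hH.not_isInducedCycleFG C hC

lemma LowerNbrsSubsingleton.le_of_bStep {G H : FG} (hG : LowerNbrsSubsingleton G)
    (h : Relation.ReflTransGen BStep G H) : H ≤ G := by
  induction h with
  | refl => exact le_rfl
  | tail _ step ih =>
    cases step with
    | deleteVert v => exact Subgraph.deleteVerts_le.trans ih
    | deleteEdge e => exact (Subgraph.deleteEdges_le _).trans ih
    | contract u v hadm => exact absurd hadm ((hG.mono ih).not_admissiblePair u v)

lemma treeFG_adj {l x y : ℕ} : (treeFG l).Adj x y ↔ x ≠ y ∧ x < l + 5 ∧ y < l + 5 ∧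
    (((y = x + 1 ∧ y ≤ l) ∨ (x = 0 ∧ (y = l + 1 ∨ y = l + 2)) ∨
        (x = l ∧ (y = l + 3 ∨ y = l + 4))) ∨
      ((x = y + 1 ∧ x ≤ l) ∨ (y = 0 ∧ (x = l + 1 ∨ x = l + 2)) ∨
        (y = l ∧ (x = l + 3 ∨ x = l + 4)))) :=
  Iff.rfl

lemma treeFG_lowerNbrsSubsingleton (l : ℕ) : LowerNbrsSubsingleton (treeFG l) := by
  intro m a ha b hb
  rw [Set.mem_ofPred_eq, treeFG_adj] at ha hb
  omega

lemma eq_zero_or_eq_of_treeFG_adj_three {l x a b c : ℕ} (ha : (treeFG l).Adj x a)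
    (hb : (treeFG l).Adj x b) (hc : (treeFG l).Adj x c) (hab : a ≠ b) (hac : a ≠ c)
    (hbc : b ≠ c) : x = 0 ∨ x = l := by
  rw [treeFG_adj] at ha hb hc
  omega

/-- Retraction of `T_l` onto its spine `0, …, l`. -/
def spineProj (l x : ℕ) : ℕ := if x ≤ l then x else if x ≤ l + 2 then 0 else l

lemma spineProj_zero (l : ℕ) : spineProj l 0 = 0 := if_pos l.zero_le

lemma spineProj_self (l : ℕ) : spineProj l l = l := if_pos le_rfl

lemma spineProj_le_of_treeFG_adj {l x y : ℕ} (h : (treeFG l).Adj x y) :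
    spineProj l y ≤ spineProj l x + 1 := by
  rw [treeFG_adj] at h
  unfold spineProj
  split_ifs <;> omega

lemma spineProj_map_spine_le {l l' : ℕ} {v : ℕ → ℕ}
    (hv : ∀ x y, (treeFG l).Adj x y → (treeFG l').Adj (v x) (v y)) :
    ∀ j ≤ l, spineProj l' (v j) ≤ spineProj l' (v 0) + j ∧
      spineProj l' (v 0) ≤ spineProj l' (v j) + j
  | 0, _ => by simp
  | j + 1, hj => by
    have ih := spineProj_map_spine_le hv j (by omega)
    have hadj := hv j (j + 1) (treeFG_adj.mpr (by omega))
    have := spineProj_le_of_treeFG_adj hadj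
    have := spineProj_le_of_treeFG_adj hadj.symm
    omega

lemma le_of_treeFG_embedding {l l' : ℕ} (hl : 0 < l) {v : ℕ → ℕ}
    (hinj : Set.InjOn v (treeFG l).verts)
    (hv : ∀ x y, (treeFG l).Adj x y → (treeFG l').Adj (v x) (v y)) : l' ≤ l := by
  have branch : ∀ {x a b c}, (treeFG l).Adj x a → (treeFG l).Adj x b → (treeFG l).Adj x c →
      a ≠ b → a ≠ c → b ≠ c → v x = 0 ∨ v x = l' := by
    intro x a b c hxa hxb hxc hab hac hbc
    have inj : ∀ {y z}, (treeFG l).Adj x y → (treeFG l).Adj x z → y ≠ z → v y ≠ v z :=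
      fun hy hz hyz h =>
        hyz (hinj (Subgraph.edge_vert _ hy.symm) (Subgraph.edge_vert _ hz.symm) h)
    exact eq_zero_or_eq_of_treeFG_adj_three (hv _ _ hxa) (hv _ _ hxb) (hv _ _ hxc)
      (inj hxa hxb hab) (inj hxa hxc hac) (inj hxb hxc hbc)
  have h0 := branch (x := 0) (a := 1) (b := l + 1) (c := l + 2) (treeFG_adj.mpr (by omega))
    (treeFG_adj.mpr (by omega)) (treeFG_adj.mpr (by omega)) (by omega) (by omega) (by omega)
  have hl' := branch (x := l) (a := l - 1) (b := l + 3) (c := l + 4) (treeFG_adj.mpr (by omega))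
    (treeFG_adj.mpr (by omega)) (treeFG_adj.mpr (by omega)) (by omega) (by omega) (by omega)
  have hne : v 0 ≠ v l :=
    fun h => hl.ne (hinj (show 0 < l + 5 by omega) (show l < l + 5 by omega) h)
  have hdist := spineProj_map_spine_le hv l le_rfl
  rcases h0 with h0 | h0 <;> rcases hl' with hl' | hl' <;> rw [h0, hl'] at hne hdist <;>
    simp only [spineProj_zero, spineProj_self] at hdist <;> omega

lemma not_isoFG_treeFG_of_le {l l' : ℕ} (hl : 0 < l) (hll : l < l') {H : FG}
    (hle : H ≤ treeFG l') : ¬ IsoFG H (treeFG l) := by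
  classical
  rintro ⟨φ⟩
  let v : ℕ → ℕ := fun x => if hx : x ∈ (treeFG l).verts then φ.symm ⟨x, hx⟩ else 0
  refine (le_of_treeFG_embedding hl (v := v) ?_ ?_).not_gt hll
  · intro x hx y hy h
    simp only [v, dif_pos hx, dif_pos hy] at h
    exact congrArg Subtype.val (φ.symm.injective (Subtype.ext h))
  · intro x y h
    simp only [v, dif_pos (Subgraph.edge_vert _ h), dif_pos (Subgraph.edge_vert _ h.symm)]
    exact hle.2 (φ.symm.map_rel_iff.mpr h)

lemma treeFG_not_bipMinor {l l' : ℕ} (hl : 0 < l) (hll : l < l') :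
    ¬ BipMinor (treeFG l) (treeFG l') := by
  rintro ⟨H, hreach, hiso⟩
  exact not_isoFG_treeFG_of_le hl hll ((treeFG_lowerNbrsSubsingleton l').le_of_bStep hreach) hiso

/-- `T_l` with its four leaves relabelled `m + 1, …, m + 4`, so that contracting the last spine
edge of `treeFGAt (l + 1) m` yields exactly `treeFGAt l m`. -/
def treeFGAt (l m : ℕ) : FG :=
  ofRel {x | x ≤ l ∨ (m + 1 ≤ x ∧ x ≤ m + 4)}
    (fun i j => (j = i + 1 ∧ j ≤ l) ∨ (i = 0 ∧ (j = m + 1 ∨ j = m + 2)) ∨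
      (i = l ∧ (j = m + 3 ∨ j = m + 4)))

lemma treeFGAt_adj {l m x y : ℕ} : (treeFGAt l m).Adj x y ↔ x ≠ y ∧
    (x ≤ l ∨ (m + 1 ≤ x ∧ x ≤ m + 4)) ∧ (y ≤ l ∨ (m + 1 ≤ y ∧ y ≤ m + 4)) ∧
    (((y = x + 1 ∧ y ≤ l) ∨ (x = 0 ∧ (y = m + 1 ∨ y = m + 2)) ∨
        (x = l ∧ (y = m + 3 ∨ y = m + 4))) ∨
      ((x = y + 1 ∧ x ≤ l) ∨ (y = 0 ∧ (x = m + 1 ∨ x = m + 2)) ∨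
        (y = l ∧ (x = m + 3 ∨ x = m + 4)))) :=
  Iff.rfl

lemma treeFGAt_succ_adj_of_ne {l m x y : ℕ} (hl : l < m) (hx : x ≠ l + 1) (hy : y ≠ l + 1) :
    (treeFGAt (l + 1) m).Adj x y ↔ (treeFGAt l m).Adj x y ∧
      ¬ (x = l ∧ (y = m + 3 ∨ y = m + 4)) ∧ ¬ (y = l ∧ (x = m + 3 ∨ x = m + 4)) := by
  rw [treeFGAt_adj, treeFGAt_adj]
  omega

lemma treeFGAt_succ_adj_last {l m y : ℕ} (hl : l < m) :
    (treeFGAt (l + 1) m).Adj (l + 1) y ↔ y = l ∨ y = m + 3 ∨ y = m + 4 := by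
  rw [treeFGAt_adj]
  omega

lemma contractFG_treeFGAt {l m : ℕ} (hl : l < m) :
    contractFG (treeFGAt (l + 1) m) l (l + 1) = treeFGAt l m := by
  refine Subgraph.ext ?_ ?_
  · ext x
    simp only [contractFG, treeFGAt, ofRel, Set.mem_sdiff, Set.mem_ofPred_eq,
      Set.mem_singleton_iff]
    omega
  · funext x y
    apply propext
    have hl_mem : l ∈ (treeFGAt (l + 1) m).verts := Or.inl (Nat.le_succ l)
    simp only [contractFG, hl_mem, true_and]
    constructor
    · rintro ⟨hxy, hx, hy, h | ⟨rfl, h⟩ | ⟨rfl, h⟩⟩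
      · exact ((treeFGAt_succ_adj_of_ne hl hx hy).mp h).1
      · have := (treeFGAt_succ_adj_last hl).mp h
        rw [treeFGAt_adj]; omega
      · have := (treeFGAt_succ_adj_last hl).mp (Subgraph.adj_symm _ h)
        rw [treeFGAt_adj]; omega
    · intro h
      have hxV : x ≤ l ∨ (m + 1 ≤ x ∧ x ≤ m + 4) := Subgraph.edge_vert _ h
      have hyV : y ≤ l ∨ (m + 1 ≤ y ∧ y ≤ m + 4) := Subgraph.edge_vert _ h.symm
      have hx : x ≠ l + 1 := by omega
      have hy : y ≠ l + 1 := by omega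
      refine ⟨Subgraph.Adj.ne h, hx, hy, ?_⟩
      by_cases hxl : x = l ∧ (y = m + 3 ∨ y = m + 4)
      · exact Or.inr (Or.inl ⟨hxl.1, (treeFGAt_succ_adj_last hl).mpr (by omega)⟩)
      by_cases hyl : y = l ∧ (x = m + 3 ∨ x = m + 4)
      · exact Or.inr (Or.inr ⟨hyl.1, ((treeFGAt_succ_adj_last hl).mpr (by omega)).symm⟩)
      exact Or.inl ((treeFGAt_succ_adj_of_ne hl hx hy).mpr ⟨h, hxl, hyl⟩)

lemma reflTransGen_mStep_treeFGAt {l l' m : ℕ} (hll : l ≤ l') (hm : l' ≤ m) :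
    Relation.ReflTransGen MStep (treeFGAt l' m) (treeFGAt l m) := by
  induction l', hll using Nat.le_induction with
  | base => exact .refl
  | succ k hlk ih =>
    have step := MStep.contract _ _ _ (treeFGAt_adj.mpr (by omega) :
      (treeFGAt (k + 1) m).Adj k (k + 1))
    rw [contractFG_treeFGAt (by omega)] at step
    exact .head step (ih (by omega))

def treeFGAtRelabel (l m x : ℕ) : ℕ := if x ≤ l then x else x + l - m

def treeFGAtIsoTreeFG {l m : ℕ} (hlm : l ≤ m) : (treeFGAt l m).coe ≃g (treeFG l).coe where
  toFun x := ⟨treeFGAtRelabel l m x, by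
    have hx : (x : ℕ) ≤ l ∨ (m + 1 ≤ x ∧ x ≤ m + 4) := x.2
    change treeFGAtRelabel l m x < l + 5
    unfold treeFGAtRelabel; split_ifs <;> omega⟩
  invFun y := ⟨if y ≤ l then y else y + m - l, by
    have hy : (y : ℕ) < l + 5 := y.2
    change _ ≤ l ∨ (m + 1 ≤ _ ∧ _ ≤ m + 4)
    split_ifs <;> omega⟩
  left_inv x := Subtype.ext <| by
    have hx : (x : ℕ) ≤ l ∨ (m + 1 ≤ x ∧ x ≤ m + 4) := x.2
    dsimp only [treeFGAtRelabel]
    split_ifs <;> omega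
  right_inv y := Subtype.ext <| by
    have hy : (y : ℕ) < l + 5 := y.2
    dsimp only [treeFGAtRelabel]
    split_ifs <;> omega
  map_rel_iff' {a b} := by
    obtain ⟨a, ha⟩ := a
    obtain ⟨b, hb⟩ := b
    change (treeFG l).Adj (treeFGAtRelabel l m a) (treeFGAtRelabel l m b) ↔
      (treeFGAt l m).Adj a b
    have hlo : ∀ x, x ≤ l → treeFGAtRelabel l m x = x := fun x hx => if_pos hx
    have hhi : ∀ x, m + 1 ≤ x → treeFGAtRelabel l m x = x + l - m :=
      fun x hx => if_neg (by omega)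
    rw [treeFG_adj, treeFGAt_adj]
    rcases (ha : a ≤ l ∨ (m + 1 ≤ a ∧ a ≤ m + 4)) with ha | ha <;>
      rcases (hb : b ≤ l ∨ (m + 1 ≤ b ∧ b ≤ m + 4)) with hb | hb
    · rw [hlo a ha, hlo b hb]; omega
    · rw [hlo a ha, hhi b hb.1]; omega
    · rw [hhi a ha.1, hlo b hb]; omega
    · rw [hhi a ha.1, hhi b hb.1]; omega

lemma treeFGAt_self (l : ℕ) : treeFGAt l l = treeFG l := by
  refine Subgraph.ext ?_ ?_
  · ext x
    simp only [treeFG, treeFGAt, ofRel, Set.mem_ofPred_eq]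
    omega
  · funext x y
    simp only [treeFG, treeFGAt, ofRel, Set.mem_ofPred_eq, eq_iff_iff]
    constructor <;> rintro ⟨hxy, hx, hy, h⟩ <;> exact ⟨hxy, by omega, by omega, h⟩

lemma treeFG_minor {l l' : ℕ} (hll : l ≤ l') : MinorFG (treeFG l) (treeFG l') := by
  refine ⟨treeFGAt l l', ?_, ⟨treeFGAtIsoTreeFG hll⟩⟩
  rw [← treeFGAt_self l']
  exact reflTransGen_mStep_treeFGAt hll le_rfl

def treeDepth (l x : ℕ) : ℕ := if x ≤ l then x else if x ≤ l + 2 then 1 else l + 1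

lemma treeFG_bipartite (l : ℕ) : BipartiteFG (treeFG l) := by
  refine ⟨Coloring.mk (fun v => ⟨treeDepth l v % 2, Nat.mod_lt _ two_pos⟩)
    fun {v w} hvw => ?_⟩
  have h : (treeFG l).Adj v w := hvw
  rw [treeFG_adj] at h
  simp only [Ne, Fin.mk.injEq, treeDepth]
  split_ifs <;> omega

lemma card_verts_treeFG (l : ℕ) : Nat.card (treeFG l).verts = l + 5 := by
  simp [treeFG, ofRel]

/-- For all integers `2 ≤ l < l'`, the tree `T_l` is a minor of `T_{l'}` but not
a bipartite minor of `T_{l'}`.  In particular, there exist infinitely many (pairwise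
non-isomorphic) pairs of bipartite graphs `(G, H)` with `H` a minor but not a bipartite minor
of `G`. -/
theorem tree_minor_not_bipMinor :
    (∀ l l' : ℕ, 2 ≤ l → l < l' →
      MinorFG (treeFG l) (treeFG l') ∧ ¬ BipMinor (treeFG l) (treeFG l')) ∧
    ∃ G H : ℕ → FG,
      (∀ n, (G n).verts.Finite ∧ (H n).verts.Finite ∧
        BipartiteFG (G n) ∧ BipartiteFG (H n) ∧
        MinorFG (H n) (G n) ∧ ¬ BipMinor (H n) (G n)) ∧
      (∀ m n, IsoFG (G m) (G n) → IsoFG (H m) (H n) → m = n) := by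
  refine ⟨fun l l' hl hll => ⟨treeFG_minor hll.le, treeFG_not_bipMinor (by omega) hll⟩,
    fun n => treeFG (n + 3), fun n => treeFG (n + 2), fun n => ?_, ?_⟩
  · exact ⟨Set.finite_Iio _, Set.finite_Iio _, treeFG_bipartite _, treeFG_bipartite _,
      treeFG_minor (by omega), treeFG_not_bipMinor (by omega) (by omega)⟩
  · rintro m n ⟨φ⟩ -
    have hcard := Nat.card_congr φ.toEquiv
    rw [card_verts_treeFG, card_verts_treeFG] at hcard
    omega
end
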